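/- Let a : ℝ → ℝ be a C^∞ function with a(s) = 0 for all s ≤ 0, and let A, f, g, X̃, Ỹ, Z̃ be defined as in the Cairns–Ghys perturbation. Then for every p ∈ ℝ³ the bracket relations [X̃,Ỹ](p) = −Z̃(p), [Z̃,X̃](p) = Ỹ(p), and [Z̃,Ỹ](p) = −X̃(p) hold; thus X̃, Ỹ, Z̃ span a Lie algebra of vector fields isomorphic to 𝔰𝔩(2,ℝ). -/

import Mathlib

/-!
Each field has the form `V = L + φ • R` with `L` linear, and `R` commutes with every linear
field, so `[L + φ • R, M + ψ • R] = [L, M] + (dψ(V) - dφ(W)) • R`. The linear parts `X, Y, Z`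
already satisfy the `𝔰𝔩(2,ℝ)` relations, and the radial coefficients reduce to two properties of
`dA`: it kills `Z` (rotation about the `z`-axis preserves `A`) and sends
`W = (xz, yz, x² + y²)` to `-2zA`. Off the `z`-axis this is a direct computation; on it, away
from the origin, `x² + y² - z² < 0` nearby, so `A` vanishes near the point; at the origin all
three fields vanish.
-/

noncomputable section

/-- The linear vector field `X(x,y,z) = (0,z,y)` on `ℝ³`. -/
def Xf (p : Fin 3 → ℝ) : Fin 3 → ℝ := ![0, p 2, p 1]

/-- The linear vector field `Y(x,y,z) = (z,0,x)` on `ℝ³`. -/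
def Yf (p : Fin 3 → ℝ) : Fin 3 → ℝ := ![p 2, 0, p 0]

/-- The linear vector field `Z(x,y,z) = (−y,x,0)` on `ℝ³`. -/
def Zf (p : Fin 3 → ℝ) : Fin 3 → ℝ := ![-p 1, p 0, 0]

/-- The Lie bracket of vector fields: `[V,W](p) = DW(p)(V(p)) − DV(p)(W(p))`. -/
def lieBr (V W : (Fin 3 → ℝ) → (Fin 3 → ℝ)) (p : Fin 3 → ℝ) : Fin 3 → ℝ :=
  fderiv ℝ W p (V p) - fderiv ℝ V p (W p)

/-- The radial vector field `R(x,y,z) = (x,y,z)`. -/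
def Rf (p : Fin 3 → ℝ) : Fin 3 → ℝ := p

/-- The quadratic form `x² + y² − z²`. -/
def Qf (p : Fin 3 → ℝ) : ℝ := (p 0) ^ 2 + (p 1) ^ 2 - (p 2) ^ 2

/-- `A(x,y,z) = a(x²+y²−z²)/(x²+y²)` when `x²+y² ≠ 0`, and `0` when `x²+y² = 0`. -/
def Afun (a : ℝ → ℝ) (p : Fin 3 → ℝ) : ℝ :=
  if (p 0) ^ 2 + (p 1) ^ 2 = 0 then 0 else a (Qf p) / ((p 0) ^ 2 + (p 1) ^ 2)

/-- `f = x·A`. -/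
def ff (a : ℝ → ℝ) (p : Fin 3 → ℝ) : ℝ := p 0 * Afun a p

/-- `g = −y·A`. -/
def gf (a : ℝ → ℝ) (p : Fin 3 → ℝ) : ℝ := -p 1 * Afun a p

/-- The Cairns–Ghys perturbed field `X̃ = X + f·R`. -/
def Xt (a : ℝ → ℝ) (p : Fin 3 → ℝ) : Fin 3 → ℝ := Xf p + ff a p • Rf p

/-- The Cairns–Ghys perturbed field `Ỹ = Y + g·R`. -/
def Yt (a : ℝ → ℝ) (p : Fin 3 → ℝ) : Fin 3 → ℝ := Yf p + gf a p • Rf p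

/-- The Cairns–Ghys perturbed field `Z̃ = Z`. -/
def Zt (p : Fin 3 → ℝ) : Fin 3 → ℝ := Zf p

open Filter Topology ContinuousLinearMap

section LinearPlusRadial

variable {𝕜 E : Type*} [NontriviallyNormedField 𝕜] [NormedAddCommGroup E] [NormedSpace 𝕜 E]

theorem hasFDerivAt_linear_add_smul_self (L : E →L[𝕜] E) {φ : E → 𝕜} {φ' : E →L[𝕜] 𝕜} {p : E}
    (hφ : HasFDerivAt φ φ' p) :
    HasFDerivAt (fun q ↦ L q + φ q • q)
      (L + (φ p • ContinuousLinearMap.id 𝕜 E + φ'.smulRight p)) p :=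
  L.hasFDerivAt.fun_add (hφ.fun_smul (hasFDerivAt_id p))

theorem lieBracket_eq_of_linear_add_smul_self {V W : E → E} (L M : E →L[𝕜] E) {φ ψ : E → 𝕜}
    {φ' ψ' : E →L[𝕜] 𝕜} {p : E} (hV : ∀ q, V q = L q + φ q • q) (hW : ∀ q, W q = M q + ψ q • q)
    (hφ : HasFDerivAt φ φ' p) (hψ : HasFDerivAt ψ ψ' p) :
    VectorField.lieBracket 𝕜 V W p = (M (L p) - L (M p)) + (ψ' (V p) - φ' (W p)) • p := by
  obtain rfl : V = _ := funext hV
  obtain rfl : W = _ := funext hW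
  rw [VectorField.lieBracket, (hasFDerivAt_linear_add_smul_self L hφ).fderiv,
    (hasFDerivAt_linear_add_smul_self M hψ).fderiv]
  simp only [add_apply, smul_apply, smulRight_apply, coe_id', id_eq, map_add, map_smul]
  module

end LinearPlusRadial

def XL : (Fin 3 → ℝ) →L[ℝ] (Fin 3 → ℝ) := pi ![0, proj 2, proj 1]
def YL : (Fin 3 → ℝ) →L[ℝ] (Fin 3 → ℝ) := pi ![proj 2, 0, proj 0]
def ZL : (Fin 3 → ℝ) →L[ℝ] (Fin 3 → ℝ) := pi ![-proj 1, proj 0, 0]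

theorem coe_XL : ⇑XL = Xf := by
  funext p; ext i; fin_cases i <;> simp [XL, Xf]
theorem coe_YL : ⇑YL = Yf := by
  funext p; ext i; fin_cases i <;> simp [YL, Yf]
theorem coe_ZL : ⇑ZL = Zf := by
  funext p; ext i; fin_cases i <;> simp [ZL, Zf]

theorem linear_bracket_relations (p : Fin 3 → ℝ) :
    YL (XL p) - XL (YL p) = -Zf p ∧ XL (ZL p) - ZL (XL p) = Yf p ∧
      YL (ZL p) - ZL (YL p) = -Xf p := by
  simp only [coe_XL, coe_YL, coe_ZL]
  refine ⟨?_, ?_, ?_⟩ <;> ext i <;> fin_cases i <;> simp [Xf, Yf, Zf]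

theorem Xt_apply (a : ℝ → ℝ) (q : Fin 3 → ℝ) : Xt a q = XL q + ff a q • q := by
  rw [coe_XL]; rfl
theorem Yt_apply (a : ℝ → ℝ) (q : Fin 3 → ℝ) : Yt a q = YL q + gf a q • q := by
  rw [coe_YL]; rfl
theorem Zt_apply (q : Fin 3 → ℝ) : Zt q = ZL q + (0 : ℝ) • q := by
  rw [coe_ZL, zero_smul, add_zero]; rfl

/-- At every point `W = y • X̃ + x • Ỹ` (the radial terms cancel since `y f + x g = 0`). -/
def Wf (p : Fin 3 → ℝ) : Fin 3 → ℝ := ![p 0 * p 2, p 1 * p 2, p 0 ^ 2 + p 1 ^ 2]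

theorem Afun_eventuallyEq_zero_of_Qf_neg {a : ℝ → ℝ} (ha0 : ∀ s : ℝ, s ≤ 0 → a s = 0)
    {p : Fin 3 → ℝ} (hQ : Qf p < 0) : Afun a =ᶠ[𝓝 p] 0 := by
  have hQc : Continuous Qf := by unfold Qf; fun_prop
  filter_upwards [hQc.continuousAt.eventually_lt continuousAt_const hQ] with q hq
  simp [Afun, ha0 _ hq.le]

theorem Afun_eventuallyEq_mul_inv (a : ℝ → ℝ) {p : Fin 3 → ℝ} (hu : p 0 ^ 2 + p 1 ^ 2 ≠ 0) :
    Afun a =ᶠ[𝓝 p] fun q ↦ a (Qf q) * (q 0 ^ 2 + q 1 ^ 2)⁻¹ := by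
  have huc : Continuous fun q : Fin 3 → ℝ ↦ q 0 ^ 2 + q 1 ^ 2 := by fun_prop
  filter_upwards [huc.continuousAt.eventually_ne hu] with q hq
  simp [Afun, hq, div_eq_mul_inv]

theorem exists_hasFDerivAt_Afun {a : ℝ → ℝ} (ha : Differentiable ℝ a)
    (ha0 : ∀ s : ℝ, s ≤ 0 → a s = 0) {p : Fin 3 → ℝ} (hp : p ≠ 0) :
    ∃ A' : (Fin 3 → ℝ) →L[ℝ] ℝ, HasFDerivAt (Afun a) A' p ∧ A' (Zf p) = 0 ∧
      A' (Wf p) = -2 * p 2 * Afun a p := by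
  by_cases hu : p 0 ^ 2 + p 1 ^ 2 = 0
  · have h0 : p 0 = 0 := by nlinarith
    have h1 : p 1 = 0 := by nlinarith
    have h2 : p 2 ≠ 0 := fun h2 ↦ hp (by ext i; fin_cases i <;> assumption)
    have hQ : Qf p < 0 := by simpa [Qf, h0, h1] using sq_pos_of_ne_zero h2
    refine ⟨0, (hasFDerivAt_const 0 p).congr_of_eventuallyEq
      (Afun_eventuallyEq_zero_of_Qf_neg ha0 hQ), rfl, ?_⟩
    simp [Afun, hu]
  · have hx := hasFDerivAt_apply (𝕜 := ℝ) (0 : Fin 3) p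
    have hy := hasFDerivAt_apply (𝕜 := ℝ) (1 : Fin 3) p
    have hz := hasFDerivAt_apply (𝕜 := ℝ) (2 : Fin 3) p
    have hQ : HasFDerivAt Qf _ p := ((hx.pow 2).add (hy.pow 2)).sub (hz.pow 2)
    have hU := (hasDerivAt_inv hu).comp_hasFDerivAt p ((hx.pow 2).add (hy.pow 2))
    have hA := (((ha _).hasDerivAt.comp_hasFDerivAt p hQ).mul hU).congr_of_eventuallyEq
      (Afun_eventuallyEq_mul_inv a hu)
    refine ⟨_, hA, ?_, ?_⟩
    · simp only [Zf, add_apply, sub_apply, smul_apply, proj_apply, Function.comp_apply,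
        Matrix.cons_val, smul_eq_mul]
      ring
    · simp only [Wf, Afun, hu, Qf, if_false, add_apply, sub_apply, smul_apply, proj_apply,
        Function.comp_apply, Matrix.cons_val, smul_eq_mul]
      field_simp
      ring

theorem lieBr_eq_lieBracket : lieBr = VectorField.lieBracket ℝ := rfl

theorem bracket_relations_of_hasFDerivAt_Afun {a : ℝ → ℝ} {p : Fin 3 → ℝ}
    {A' : (Fin 3 → ℝ) →L[ℝ] ℝ} (hA : HasFDerivAt (Afun a) A' p) (hZ : A' (Zf p) = 0)
    (hW : A' (Wf p) = -2 * p 2 * Afun a p) :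
    lieBr (Xt a) (Yt a) p = -Zt p ∧ lieBr Zt (Xt a) p = Yt a p ∧
      lieBr Zt (Yt a) p = -Xt a p := by
  set f' : (Fin 3 → ℝ) →L[ℝ] ℝ := p 0 • A' + Afun a p • proj 0
  set g' : (Fin 3 → ℝ) →L[ℝ] ℝ := -p 1 • A' + Afun a p • -proj 1
  have hf : HasFDerivAt (ff a) f' p := (hasFDerivAt_apply 0 p).mul hA
  have hg : HasFDerivAt (gf a) g' p := (hasFDerivAt_apply 1 p).neg.mul hA
  have h0 : HasFDerivAt (fun _ ↦ (0 : ℝ)) (0 : (Fin 3 → ℝ) →L[ℝ] ℝ) p := hasFDerivAt_const 0 p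
  have hfg : g' (Xt a p) - f' (Yt a p) = 0 := by
    have hXY : p 1 • Xt a p + p 0 • Yt a p = Wf p := by
      ext i; fin_cases i <;>
        simp only [Xt, Yt, Xf, Yf, Wf, Rf, ff, gf, Pi.add_apply, Pi.smul_apply, smul_eq_mul,
          Fin.zero_eta, Fin.mk_one, Fin.reduceFinMk, Matrix.cons_val] <;> ring
    have hA'XY := congrArg A' hXY
    rw [map_add, map_smul, map_smul, smul_eq_mul, smul_eq_mul, hW] at hA'XY
    have hX1 : Xt a p 1 = p 2 + ff a p * p 1 := by simp [Xt, Xf, Rf]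
    have hY0 : Yt a p 0 = p 2 + gf a p * p 0 := by simp [Yt, Yf, Rf]
    simp only [f', g', add_apply, smul_apply, neg_apply, proj_apply, smul_eq_mul, hX1, hY0,
      ff, gf]
    linear_combination -hA'XY
  have hfZ : f' (Zt p) = gf a p := by
    simp only [f', add_apply, smul_apply, proj_apply, smul_eq_mul, Zt, hZ]
    simp [Zf, gf, mul_comm]
  have hgZ : g' (Zt p) = -ff a p := by
    simp only [g', add_apply, smul_apply, neg_apply, proj_apply, smul_eq_mul, Zt, hZ]
    simp [Zf, ff, mul_comm]
  obtain ⟨hXY, hZX, hZY⟩ := linear_bracket_relations p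
  rw [lieBr_eq_lieBracket,
    lieBracket_eq_of_linear_add_smul_self _ _ (Xt_apply a) (Yt_apply a) hf hg,
    lieBracket_eq_of_linear_add_smul_self _ _ Zt_apply (Xt_apply a) h0 hf,
    lieBracket_eq_of_linear_add_smul_self _ _ Zt_apply (Yt_apply a) h0 hg]
  simp only [hfg, hfZ, hgZ, zero_apply, sub_zero, zero_smul, add_zero, hXY, hZX, hZY, neg_smul]
  exact ⟨rfl, rfl, (neg_add _ _).symm⟩

/-- If `a` is `C^∞` and vanishes on `(−∞,0]`, the Cairns–Ghys perturbed vector fields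
`X̃ = X + f·R`, `Ỹ = Y + g·R`, `Z̃ = Z` satisfy the same `𝔰𝔩(2,ℝ)` bracket relations
`[X̃,Ỹ] = −Z̃`, `[Z̃,X̃] = Ỹ`, `[Z̃,Ỹ] = −X̃` at every point of `ℝ³`. -/
theorem cairnsGhys_bracket_relations
    (a : ℝ → ℝ) (ha : ContDiff ℝ (⊤ : ℕ∞) a) (ha0 : ∀ s : ℝ, s ≤ 0 → a s = 0) :
    ∀ p : Fin 3 → ℝ,
      lieBr (Xt a) (Yt a) p = -Zt p ∧
      lieBr Zt (Xt a) p = Yt a p ∧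
      lieBr Zt (Yt a) p = -Xt a p := by
  intro p
  rcases eq_or_ne p 0 with rfl | hp
  -- all three fields vanish at the origin, where `A` need not be differentiable
  · simp [lieBr, Xt_apply, Yt_apply, Zt_apply]
  · obtain ⟨A', hA, hZ, hW⟩ := exists_hasFDerivAt_Afun (ha.differentiable (by simp)) ha0 hp
    exact bracket_relations_of_hasFDerivAt_Afun hA hZ hW
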